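/- Let d, n be positive integers and let Ω₁, …, Ωₙ be nonempty compact convex subsets of ℝ^d. Let X be the convex hull of ⋃ᵢ Ωᵢ, V = Ω₁ × ⋯ × Ωₙ, Y = { ((y₁,s₁),…,(yₙ,sₙ)) : ‖yᵢ‖ ≤ sᵢ for all i, ∑ᵢ sᵢ = 1 }, f(x, v, y) = ∑ᵢ ⟨x − vᵢ, yᵢ⟩, and R* = inf over x ∈ ℝ^d of max over i of sup over v ∈ Ωᵢ of ‖x − v‖. If (x*, y*, v₁*, …, vₙ*) is a Nash equilibrium of the game min over X, max over Y × V of f, then f(x*, v*, y*) = R* and the closed ball of center x* and radius R* encloses every Ωᵢ, i.e., ‖x* − v‖ ≤ R* for every i and every v ∈ Ωᵢ. -/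

import Mathlib

/-!
Write `F` for the value of the equilibrium and `R x` for the largest distance from `x` to a
point of `⋃ i, Ωᵢ`. Against the fixed `x*`, the maximizing player may put all of the weight on
one index `i` and play the unit vector pointing from any `v ∈ Ωᵢ` to `x*`; optimality of
`(y*, v*)` then gives `‖x* - v‖ ≤ F`, so the `Ωᵢ` are bounded and `R x* ≤ F`. Conversely, for
fixed `(y*, v*)` the payoff is at most `R x` by Cauchy–Schwarz and `∑ sᵢ = 1`, so optimality of
`x*` gives `F ≤ R x` for every `x` in the closure of `X`. For an arbitrary `x`, its metric
projection onto that closed convex set is no farther from any point of the set, hence from any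
point of `⋃ i, Ωᵢ`.
-/

open Bornology Metric Set
open scoped RealInnerProductSpace

theorem norm_sub_le_of_norm_eq_iInf {E : Type*} [NormedAddCommGroup E] [InnerProductSpace ℝ E]
    {K : Set E} (hK : Convex ℝ K) {x u w : E} (hu : u ∈ K) (hw : w ∈ K)
    (hproj : ‖x - u‖ = ⨅ z : K, ‖x - z‖) : ‖u - w‖ ≤ ‖x - w‖ := by
  have hobtuse : ⟪x - u, w - u⟫ ≤ 0 :=
    (norm_eq_iInf_iff_real_inner_le_zero hK hu).1 hproj w hw
  have hsq : ‖x - w‖ ^ 2 = ‖x - u‖ ^ 2 - 2 * ⟪x - u, w - u⟫ + ‖w - u‖ ^ 2 := by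
    rw [← norm_sub_sq_real, sub_sub_sub_cancel_right]
  rw [← sq_le_sq₀ (norm_nonneg _) (norm_nonneg _), norm_sub_rev, hsq]
  nlinarith [sq_nonneg ‖x - u‖]

section

variable {E ι : Type*} [NormedAddCommGroup E]

/-- The radius of the smallest closed ball centred at `x` that encloses every `Ω i`, provided
the `Ω i` are bounded (otherwise the real `⨆` takes the junk value `0`). -/
noncomputable def farthestDist (Ω : ι → Set E) (x : E) : ℝ :=
  ⨆ i, ⨆ v : Ω i, ‖x - v‖

variable {Ω : ι → Set E}

theorem farthestDist_nonneg (x : E) : 0 ≤ farthestDist Ω x :=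
  Real.iSup_nonneg fun _ => Real.iSup_nonneg fun _ => norm_nonneg _

theorem farthestDist_le {x : E} {r : ℝ} (hr : 0 ≤ r) (h : ∀ i, ∀ v ∈ Ω i, ‖x - v‖ ≤ r) :
    farthestDist Ω x ≤ r :=
  Real.iSup_le (fun i => Real.iSup_le (fun v => h i v v.2) hr) hr

theorem norm_sub_le_farthestDist [Finite ι] (hΩ : ∀ i, IsBounded (Ω i)) (x : E) {i : ι} {v : E}
    (hv : v ∈ Ω i) : ‖x - v‖ ≤ farthestDist Ω x := by
  obtain ⟨r, hr⟩ := (isBounded_iff_subset_closedBall x).1 (hΩ i)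
  have hbdd : BddAbove (range fun w : Ω i => ‖x - w‖) :=
    ⟨r, forall_mem_range.2 fun w => by simpa [dist_eq_norm'] using hr w.2⟩
  exact (le_ciSup hbdd ⟨v, hv⟩).trans
    (le_ciSup (f := fun i => ⨆ w : Ω i, ‖x - w‖) (Finite.bddAbove_range _) i)

theorem exists_mem_closure_farthestDist_le [InnerProductSpace ℝ E] [CompleteSpace E] [Finite ι]
    (hΩ : ∀ i, IsBounded (Ω i)) {X : Set E} (hX : Convex ℝ X) (hXne : X.Nonempty)
    (hΩX : ∀ i, Ω i ⊆ X) (x : E) : ∃ x' ∈ closure X, farthestDist Ω x' ≤ farthestDist Ω x := by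
  obtain ⟨x', hx', hproj⟩ := exists_norm_eq_iInf_of_complete_convex hXne.closure
    isClosed_closure.isComplete hX.closure x
  refine ⟨x', hx', farthestDist_le (farthestDist_nonneg x) fun i v hv => ?_⟩
  exact (norm_sub_le_of_norm_eq_iInf hX.closure hx' (subset_closure (hΩX i hv)) hproj).trans
    (norm_sub_le_farthestDist hΩ x hv)

end

section

variable {E ι : Type*} [NormedAddCommGroup E] [InnerProductSpace ℝ E] [Fintype ι]

/-- The payoff `f` of the SEB game; the second component of `y i` is the weight `sᵢ`, which
enters only through the constraints. -/
def sebPayoff (x : E) (y : ι → E × ℝ) (v : ι → E) : ℝ :=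
  ∑ i, ⟪x - v i, (y i).1⟫

theorem continuous_sebPayoff (y : ι → E × ℝ) (v : ι → E) :
    Continuous fun x => sebPayoff x y v := by
  unfold sebPayoff
  fun_prop

variable {Ω : ι → Set E}

theorem sebPayoff_le_farthestDist (hΩ : ∀ i, IsBounded (Ω i)) (x : E) {y : ι → E × ℝ}
    {v : ι → E} (hy : ∀ i, ‖(y i).1‖ ≤ (y i).2) (hy₁ : ∑ i, (y i).2 = 1)
    (hv : ∀ i, v i ∈ Ω i) : sebPayoff x y v ≤ farthestDist Ω x :=
  calc sebPayoff x y v ≤ ∑ i, farthestDist Ω x * (y i).2 := by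
        refine Finset.sum_le_sum fun i _ => (real_inner_le_norm _ _).trans ?_
        exact mul_le_mul (norm_sub_le_farthestDist hΩ x (hv i)) (hy i) (norm_nonneg _)
          (farthestDist_nonneg x)
    _ = farthestDist Ω x := by rw [← Finset.mul_sum, hy₁, mul_one]

variable {x : E} {F : ℝ}

theorem nonneg_of_forall_sebPayoff_le
    (hmax : ∀ (y : ι → E × ℝ) (v : ι → E), (∀ i, ‖(y i).1‖ ≤ (y i).2) → ∑ i, (y i).2 = 1 →
      (∀ i, v i ∈ Ω i) → sebPayoff x y v ≤ F)
    {y : ι → E × ℝ} {v : ι → E}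
    (hy : ∀ i, ‖(y i).1‖ ≤ (y i).2) (hy₁ : ∑ i, (y i).2 = 1) (hv : ∀ i, v i ∈ Ω i) : 0 ≤ F := by
  simpa [sebPayoff] using
    hmax (fun i => (0, (y i).2)) v (fun i => by simpa using (norm_nonneg _).trans (hy i)) hy₁ hv

theorem norm_sub_le_of_forall_sebPayoff_le [DecidableEq ι]
    (hmax : ∀ (y : ι → E × ℝ) (v : ι → E), (∀ i, ‖(y i).1‖ ≤ (y i).2) → ∑ i, (y i).2 = 1 →
      (∀ i, v i ∈ Ω i) → sebPayoff x y v ≤ F)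
    {v : ι → E} (hv : ∀ i, v i ∈ Ω i) {i : ι} {w : E} (hw : w ∈ Ω i) : ‖x - w‖ ≤ F := by
  -- all weight on `i`, direction `x - w` normalized (the zero vector when `x = w`)
  set u : E := ‖x - w‖⁻¹ • (x - w)
  have hu : ‖u‖ ≤ 1 := by
    rw [norm_smul, norm_inv, norm_norm]
    exact inv_mul_le_one_of_le₀ le_rfl (norm_nonneg _)
  have hpay : sebPayoff x (Pi.single i (u, 1)) (Function.update v i w) = ‖x - w‖ := by
    rw [sebPayoff, Finset.sum_eq_single i (fun j _ hj => by simp [hj]) (by simp)]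
    simp only [Pi.single_eq_same, Function.update_self, u, real_inner_smul_right,
      real_inner_self_eq_norm_sq]
    rcases eq_or_ne ‖x - w‖ 0 with h | h
    · simp [h]
    · field_simp
  rw [← hpay]
  refine hmax _ _ (fun j => ?_) (by simp [Pi.single_apply, apply_ite Prod.snd]) (fun j => ?_)
  · rcases eq_or_ne j i with rfl | hj <;> simp [*]
  · rcases eq_or_ne j i with rfl | hj <;> simp [*]

theorem sebPayoff_le_farthestDist_of_isMinOn [CompleteSpace E] (hΩ : ∀ i, IsBounded (Ω i))
    {X : Set E} (hX : Convex ℝ X) (hΩX : ∀ i, Ω i ⊆ X) {x₀ : E} {y : ι → E × ℝ} {v : ι → E}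
    (hmin : IsMinOn (fun x => sebPayoff x y v) X x₀) (hx₀ : x₀ ∈ X)
    (hy : ∀ i, ‖(y i).1‖ ≤ (y i).2) (hy₁ : ∑ i, (y i).2 = 1) (hv : ∀ i, v i ∈ Ω i) (x : E) :
    sebPayoff x₀ y v ≤ farthestDist Ω x := by
  obtain ⟨x', hx', hx'x⟩ := exists_mem_closure_farthestDist_le hΩ hX ⟨x₀, hx₀⟩ hΩX x
  calc sebPayoff x₀ y v ≤ sebPayoff x' y v :=
        isMinOn_iff.1 (hmin.closure (continuous_sebPayoff y v).continuousOn) x' hx'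
    _ ≤ farthestDist Ω x' := sebPayoff_le_farthestDist hΩ x' hy hy₁ hv
    _ ≤ farthestDist Ω x := hx'x

end

theorem seb_game_nash_gives_seb_general (d n : ℕ)
    (Ω : Fin n → Set (EuclideanSpace ℝ (Fin d)))
    (xs : EuclideanSpace ℝ (Fin d)) (ys : Fin n → (EuclideanSpace ℝ (Fin d)) × ℝ)
    (vs : Fin n → EuclideanSpace ℝ (Fin d))
    (hxs : xs ∈ convexHull ℝ (⋃ i, Ω i))
    (hys₁ : ∀ i, ‖(ys i).1‖ ≤ (ys i).2) (hys₂ : (∑ i, (ys i).2) = 1)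
    (hvs : ∀ i, vs i ∈ Ω i)
    (hmin : ∀ x : EuclideanSpace ℝ (Fin d), x ∈ convexHull ℝ (⋃ i, Ω i) →
      (∑ i, (inner ℝ (xs - vs i) ((ys i).1) : ℝ)) ≤ ∑ i, (inner ℝ (x - vs i) ((ys i).1) : ℝ))
    (hmax : ∀ (y : Fin n → (EuclideanSpace ℝ (Fin d)) × ℝ)
        (v : Fin n → EuclideanSpace ℝ (Fin d)),
      (∀ i, ‖(y i).1‖ ≤ (y i).2) → (∑ i, (y i).2) = 1 → (∀ i, v i ∈ Ω i) →
      (∑ i, (inner ℝ (xs - v i) ((y i).1) : ℝ)) ≤ ∑ i, (inner ℝ (xs - vs i) ((ys i).1) : ℝ)) :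
    (∑ i, (inner ℝ (xs - vs i) ((ys i).1) : ℝ)) =
      (⨅ x : EuclideanSpace ℝ (Fin d), ⨆ i, ⨆ v : (Ω i), ‖x - v.1‖) ∧
    (∀ i, ∀ v ∈ Ω i,
      ‖xs - v‖ ≤ ⨅ x : EuclideanSpace ℝ (Fin d), ⨆ i, ⨆ v : (Ω i), ‖x - v.1‖) := by
  have hball : ∀ i, ∀ v ∈ Ω i, ‖xs - v‖ ≤ sebPayoff xs ys vs :=
    fun i v hv => norm_sub_le_of_forall_sebPayoff_le hmax hvs hv
  have hbdd : ∀ i, IsBounded (Ω i) := fun i =>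
    (isBounded_closedBall (x := xs)).subset fun v hv => by
      simpa [dist_eq_norm'] using hball i v hv
  have hlower : ∀ x, sebPayoff xs ys vs ≤ farthestDist Ω x :=
    sebPayoff_le_farthestDist_of_isMinOn hbdd (convex_convexHull ℝ _)
      (fun i => (subset_iUnion Ω i).trans (subset_convexHull ℝ _)) (isMinOn_iff.2 hmin) hxs
      hys₁ hys₂ hvs
  have hupper : farthestDist Ω xs ≤ sebPayoff xs ys vs :=
    farthestDist_le (nonneg_of_forall_sebPayoff_le hmax hys₁ hys₂ hvs) hball
  have hvalue : sebPayoff xs ys vs = ⨅ x, farthestDist Ω x :=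
    le_antisymm (le_ciInf hlower)
      ((ciInf_le ⟨0, forall_mem_range.2 farthestDist_nonneg⟩ xs).trans hupper)
  exact ⟨hvalue, fun i v hv => (hball i v hv).trans hvalue.le⟩

/-- **SEB game: Nash equilibria give the SEB.** If `(x*, y*, v*)` is a Nash equilibrium
of the SEB game `min_{x ∈ X} max_{(y, v) ∈ Y × V} f`, then the value `f(x*, v*, y*)`
equals the SEB radius `R* = inf_x max_i sup_{v ∈ Ωᵢ} ‖x - v‖`, and the closed ball
`B(x*, R*)` encloses every `Ωᵢ`. -/
theorem seb_game_nash_gives_seb (d n : ℕ) (hd : 0 < d) (hn : 0 < n)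
    (Ω : Fin n → Set (EuclideanSpace ℝ (Fin d)))
    (hne : ∀ i, (Ω i).Nonempty) (hcpt : ∀ i, IsCompact (Ω i))
    (hconv : ∀ i, Convex ℝ (Ω i))
    (xs : EuclideanSpace ℝ (Fin d)) (ys : Fin n → (EuclideanSpace ℝ (Fin d)) × ℝ)
    (vs : Fin n → EuclideanSpace ℝ (Fin d))
    (hxs : xs ∈ convexHull ℝ (⋃ i, Ω i))
    (hys₁ : ∀ i, ‖(ys i).1‖ ≤ (ys i).2) (hys₂ : (∑ i, (ys i).2) = 1)
    (hvs : ∀ i, vs i ∈ Ω i)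
    (hmin : ∀ x : EuclideanSpace ℝ (Fin d), x ∈ convexHull ℝ (⋃ i, Ω i) →
      (∑ i, (inner ℝ (xs - vs i) ((ys i).1) : ℝ)) ≤ ∑ i, (inner ℝ (x - vs i) ((ys i).1) : ℝ))
    (hmax : ∀ (y : Fin n → (EuclideanSpace ℝ (Fin d)) × ℝ)
        (v : Fin n → EuclideanSpace ℝ (Fin d)),
      (∀ i, ‖(y i).1‖ ≤ (y i).2) → (∑ i, (y i).2) = 1 → (∀ i, v i ∈ Ω i) →
      (∑ i, (inner ℝ (xs - v i) ((y i).1) : ℝ)) ≤ ∑ i, (inner ℝ (xs - vs i) ((ys i).1) : ℝ)) :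
    (∑ i, (inner ℝ (xs - vs i) ((ys i).1) : ℝ)) =
      (⨅ x : EuclideanSpace ℝ (Fin d), ⨆ i, ⨆ v : (Ω i), ‖x - v.1‖) ∧
    (∀ i, ∀ v ∈ Ω i,
      ‖xs - v‖ ≤ ⨅ x : EuclideanSpace ℝ (Fin d), ⨆ i, ⨆ v : (Ω i), ‖x - v.1‖) :=
  seb_game_nash_gives_seb_general d n Ω xs ys vs hxs hys₁ hys₂ hvs hmin hmax
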